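/- In the example with 6 voters having cyclic preferences over 6 candidates {a,b,c,d,e,f} (voters 1–3 ranking a≻b≻c, b≻c≻a, c≻a≻b above d,e,f; voters 4–6 ranking d≻e≻f, e≻f≻d, f≻d≻e above a,b,c), no committee of size K = 3 is stable under the Ranking preference model. -/

import Mathlib

/-- Ranking preference: some member of `S₂` beats every member of `S₁`
(lower rank number = more preferred). -/
def RankPrefers (rank : Fin 6 → ℕ) (S₁ S₂ : Finset (Fin 6)) : Prop :=
  ∃ c ∈ S₂, ∀ c' ∈ S₁, rank c < rank c'

/-- `V(S,S')`: number of voters strictly preferring `S'` to `S`. -/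
noncomputable def Vrank (rank : Fin 6 → Fin 6 → ℕ) (S S' : Finset (Fin 6)) : ℕ :=
  Nat.card {v : Fin 6 // RankPrefers (rank v) S S'}

/-- The rankings of the six voters over candidates `a,b,c,d,e,f = 0,…,5`:
voter 1: a≻b≻c≻d≻e≻f, voter 2: b≻c≻a≻d≻e≻f, voter 3: c≻a≻b≻d≻e≻f,
voter 4: d≻e≻f≻a≻b≻c, voter 5: e≻f≻d≻a≻b≻c, voter 6: f≻d≻e≻a≻b≻c.
`cyclicRank v c` is the position (0 = best) of candidate `c` in voter `v`'s
ranking. -/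
def cyclicRank : Fin 6 → Fin 6 → ℕ :=
  ![![0, 1, 2, 3, 4, 5],
    ![2, 0, 1, 3, 4, 5],
    ![1, 2, 0, 3, 4, 5],
    ![3, 4, 5, 0, 1, 2],
    ![3, 4, 5, 2, 0, 1],
    ![3, 4, 5, 1, 2, 0]]

/-! Voters 1–3 put `a, b, c` above `d, e, f` and voters 4–6 the reverse, while inside each
block the three rankings rotate a 3-cycle, so every candidate of a block is beaten by its
cyclic predecessor for two of the block's three voters. A size-3 committee is either one
block, and then any candidate of the other block is preferred by all three voters of the
other block, or it meets some block in exactly one member `x`, and then the cyclic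
predecessor of `x`, which is not in the committee, is preferred by two voters of that block.
Either way a single candidate with two supporters blocks, since `(1/3)·6 = 2`. -/

open Finset

theorem rankPrefers_singleton_iff (rank : Fin 6 → ℕ) (S : Finset (Fin 6)) (x : Fin 6) :
    RankPrefers rank S {x} ↔ ∀ c ∈ S, rank x < rank c := by
  simp [RankPrefers]

theorem Vrank_singleton (rank : Fin 6 → Fin 6 → ℕ) (S : Finset (Fin 6)) (x : Fin 6) :
    Vrank rank S {x} = #{v | ∀ c ∈ S, rank v x < rank v c} := by
  simp only [Vrank, rankPrefers_singleton_iff, Nat.card_eq_fintype_card, Fintype.card_subtype]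

theorem exists_candidate_preferred_by_two (S : Finset (Fin 6)) (hS : S.card = 3) :
    ∃ x, 2 ≤ #{v | ∀ c ∈ S, cyclicRank v x < cyclicRank v c} := by
  revert S
  decide

/-- In the cyclic-preference example with 6 voters and 6 candidates, no
committee of size `K = 3` is stable: every size-3 committee `S` admits a
nonempty blocking committee `S'` with `|S'| ≤ 3` and `V(S,S') ≥ 2|S'|`
(note `(|S'|/3)·6 = 2|S'|`). -/
theorem no_stable_committee_cyclic_example :
    ∀ S : Finset (Fin 6), S.card = 3 →
      ∃ S' : Finset (Fin 6), S'.Nonempty ∧ S'.card ≤ 3 ∧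
        2 * S'.card ≤ Vrank cyclicRank S S' := by
  intro S hS
  obtain ⟨x, hx⟩ := exists_candidate_preferred_by_two S hS
  refine ⟨{x}, singleton_nonempty x, by simp, ?_⟩
  rwa [Vrank_singleton, card_singleton, mul_one]
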